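/- Let A be a VCG-based combinatorial cost-sharing mechanism outputting ALG = argmax_S Σ_i v_i(S_i) − H(S), with H : 2^M → ℝ≥0 ∪ {∞} normalized and monotone, charging VCG payments, on a domain containing all additive valuations. If A always covers the cost (Σ_i p_i ≥ C(ALG) in every instance), then H(S) ≥ P_C(S) for every allocation S. -/
import Mathlib
open Finset
variable {α : Type*}

noncomputable def potential [DecidableEq α] (n : ℕ)
    (C : Finset α → ℝ) (S : Fin n → Finset α) : ℝ :=
  ∑ I ∈ (univ : Finset (Fin n)).powerset.filter (· ≠ ∅),
    C (I.biUnion S) / ((I.card : ℝ) * (n.choose I.card : ℝ))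

lemma biUnion_update_empty [DecidableEq α] {n : ℕ} (S : Fin n → Finset α)
    (i : Fin n) (I : Finset (Fin n)) :
    I.biUnion (Function.update S i ∅) = (I.erase i).biUnion S := by
  ext x
  simp only [mem_biUnion, mem_erase, Function.update_apply]
  constructor
  · rintro ⟨j, hj, hx⟩
    by_cases h : j = i
    · simp [h] at hx
    · exact ⟨j, ⟨h, hj⟩, by simpa [h] using hx⟩
  · rintro ⟨j, ⟨hne, hj⟩, hx⟩
    exact ⟨j, hj, by simpa [hne] using hx⟩

lemma pot_id [DecidableEq α] (n : ℕ) (C : Finset α → ℝ) (hC0 : C ∅ = 0)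
    (S : Fin n → Finset α) :
    ∑ i : Fin n, (potential n C S - potential n C (Function.update S i ∅)) =
      C (univ.biUnion S) := by
  classical
  set F := (univ : Finset (Fin n)).powerset.filter (· ≠ ∅) with hF
  set g : Finset (Fin n) → ℝ := fun J => C (J.biUnion S) with hg
  set d : Finset (Fin n) → ℝ := fun I => (I.card : ℝ) * (n.choose I.card : ℝ) with hd
  have step1 : ∀ i : Fin n,
      potential n C S - potential n C (Function.update S i ∅) =
      ∑ I ∈ F, (g I - g (I.erase i)) / d I := by
    intro i
    unfold potential
    rw [← Finset.sum_sub_distrib]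
    exact Finset.sum_congr rfl fun I hI => by rw [biUnion_update_empty, ← sub_div]
  rw [Finset.sum_congr rfl (fun i _ => step1 i), Finset.sum_comm]
  have step2 : ∀ I ∈ F, ∑ i : Fin n, (g I - g (I.erase i)) / d I =
      ∑ i ∈ I, (g I - g (I.erase i)) / d I := by
    intro I hI
    symm
    apply Finset.sum_subset (Finset.subset_univ I)
    intro i _ hiI
    rw [Finset.erase_eq_of_notMem hiI]
    simp
  rw [Finset.sum_congr rfl step2]
  have split : ∀ I ∈ F, ∑ i ∈ I, (g I - g (I.erase i)) / d I =
      g I / (n.choose I.card : ℝ) - ∑ i ∈ I, g (I.erase i) / d I := by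
    intro I hI
    simp only [hF, mem_filter, mem_powerset] at hI
    have hne : I.Nonempty := Finset.nonempty_iff_ne_empty.2 hI.2
    have hcard : (I.card : ℝ) ≠ 0 := by
      have := Finset.card_pos.2 hne
      positivity
    have e1 : ∑ i ∈ I, (g I - g (I.erase i)) / d I =
        ∑ i ∈ I, (g I / d I - g (I.erase i) / d I) :=
      Finset.sum_congr rfl fun i _ => by rw [sub_div]
    rw [e1, Finset.sum_sub_distrib, Finset.sum_const, nsmul_eq_mul]
    congr 1
    rw [hd, ← div_div, ← mul_div_assoc, ← mul_div_assoc,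
      mul_div_cancel_left₀ (g I) hcard]
  rw [Finset.sum_congr rfl split, Finset.sum_sub_distrib]
  have reindex : ∑ I ∈ F, ∑ i ∈ I, g (I.erase i) / d I =
      ∑ J ∈ (univ : Finset (Fin n)).powerset, ∑ i ∈ univ \ J,
        g J / (((J.card : ℝ) + 1) * (n.choose (J.card + 1) : ℝ)) := by
    rw [Finset.sum_sigma' F (fun I => I) (fun I i => g (I.erase i) / d I),
        Finset.sum_sigma' _ (fun J => univ \ J)
          (fun J i => g J / (((J.card : ℝ) + 1) * (n.choose (J.card + 1) : ℝ)))]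
    apply Finset.sum_nbij' (fun x => ⟨x.1.erase x.2, x.2⟩)
      (fun x => ⟨insert x.2 x.1, x.2⟩)
    · rintro ⟨I, i⟩ hIi
      rw [Finset.mem_sigma] at hIi ⊢
      exact ⟨mem_powerset.2 (Finset.subset_univ _),
        Finset.mem_sdiff.2 ⟨mem_univ _, Finset.notMem_erase _ _⟩⟩
    · rintro ⟨J, i⟩ hJi
      rw [Finset.mem_sigma] at hJi ⊢
      refine ⟨?_, Finset.mem_insert_self _ _⟩
      rw [hF, mem_filter, mem_powerset]
      exact ⟨Finset.subset_univ _, (Finset.insert_nonempty _ _).ne_empty⟩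
    · rintro ⟨I, i⟩ hIi
      rw [Finset.mem_sigma] at hIi
      simp [Finset.insert_erase hIi.2]
    · rintro ⟨J, i⟩ hJi
      rw [Finset.mem_sigma, Finset.mem_sdiff] at hJi
      simp [Finset.erase_insert hJi.2.2]
    · rintro ⟨I, i⟩ hIi
      rw [Finset.mem_sigma] at hIi
      have hc : (I.erase i).card + 1 = I.card := Finset.card_erase_add_one hIi.2
      simp only [hd]
      rw [← hc]
      push_cast
      ring_nf
  rw [reindex]
  have inner : ∀ J ∈ (univ : Finset (Fin n)).powerset,
      ∑ i ∈ univ \ J, g J / (((J.card : ℝ) + 1) * (n.choose (J.card + 1) : ℝ)) =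
      ((n - J.card : ℕ) : ℝ) * (g J / (((J.card : ℝ) + 1) * (n.choose (J.card + 1) : ℝ))) := by
    intro J hJ
    rw [Finset.sum_const, nsmul_eq_mul]
    congr 2
    rw [Finset.card_sdiff_of_subset (Finset.subset_univ J), Finset.card_univ, Fintype.card_fin]
  rw [Finset.sum_congr rfl inner]
  have drop : ∑ J ∈ (univ : Finset (Fin n)).powerset,
      ((n - J.card : ℕ) : ℝ) * (g J / (((J.card : ℝ) + 1) * (n.choose (J.card + 1) : ℝ))) =
      ∑ J ∈ F, ((n - J.card : ℕ) : ℝ) * (g J / (((J.card : ℝ) + 1) * (n.choose (J.card + 1) : ℝ))) := by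
    symm
    apply Finset.sum_filter_of_ne
    intro J _ hJne hJempty
    exact absurd (by rw [hJempty]; simp [hg, hC0] : _ = (0:ℝ)) hJne
  rw [drop, ← Finset.sum_sub_distrib]
  by_cases hn : n = 0
  · subst hn
    have hFe : F = ∅ := by
      rw [hF]
      apply Finset.eq_empty_of_forall_notMem
      intro I hI
      rw [mem_filter] at hI
      exact hI.2 (Finset.eq_empty_of_forall_notMem fun x => Fin.elim0 x)
    have hU : (univ : Finset (Fin 0)).biUnion S = ∅ :=
      Finset.eq_empty_of_forall_notMem fun x hx => by
        rw [Finset.mem_biUnion] at hx; exact Fin.elim0 hx.choose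
    rw [hFe, Finset.sum_empty, hg] at *
    simp only [hU, hC0]
  · have huniv : (univ : Finset (Fin n)) ∈ F := by
      rw [hF, mem_filter, mem_powerset]
      refine ⟨Finset.Subset.refl _, ?_⟩
      have : (univ : Finset (Fin n)).Nonempty :=
        Finset.univ_nonempty_iff.2 (Fin.pos_iff_nonempty.1 (Nat.pos_of_ne_zero hn))
      exact this.ne_empty
    rw [Finset.sum_eq_single_of_mem univ huniv]
    · rw [Finset.card_univ, Fintype.card_fin, Nat.sub_self, Nat.cast_zero, zero_mul,
        Nat.choose_self, Nat.cast_one, div_one, sub_zero]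
    · intro I hIF hIne
      rw [hF, mem_filter, mem_powerset] at hIF
      have hlt : I.card < n := by
        have hle : I.card ≤ n := by
          have := Finset.card_le_card hIF.1
          rwa [Finset.card_univ, Fintype.card_fin] at this
        rcases lt_or_eq_of_le hle with h | h
        · exact h
        · exact absurd (Finset.eq_univ_of_card I
            (by rw [h, Fintype.card_fin])) hIne
      have hnk : ((n - I.card : ℕ) : ℝ) ≠ 0 := by
        have : 0 < n - I.card := Nat.sub_pos_of_lt hlt
        positivity
      have key : ((I.card : ℝ) + 1) * (n.choose (I.card + 1) : ℝ) =
          (n.choose I.card : ℝ) * ((n - I.card : ℕ) : ℝ) := by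
        have h2 : n.choose (I.card + 1) * (I.card + 1) = n.choose I.card * (n - I.card) :=
          Nat.choose_succ_right_eq n I.card
        have h3 : (n.choose (I.card + 1) : ℝ) * ((I.card : ℝ) + 1) =
            (n.choose I.card : ℝ) * ((n - I.card : ℕ) : ℝ) := by exact_mod_cast h2
        rw [mul_comm]; exact h3
      rw [key, ← div_div, mul_comm (((n - I.card : ℕ)) : ℝ), div_mul_cancel₀ _ hnk,
        sub_self]
lemma pot_zero [DecidableEq α] (n : ℕ) (C : Finset α → ℝ) (hC0 : C ∅ = 0)
    (S : Fin n → Finset α) (hS : ∀ i, S i = ∅) : potential n C S = 0 := by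
  unfold potential
  apply Finset.sum_eq_zero
  intro I hI
  have : I.biUnion S = ∅ := by
    apply Finset.eq_empty_of_forall_notMem
    intro x hx
    rw [Finset.mem_biUnion] at hx
    obtain ⟨i, _, hxi⟩ := hx
    rw [hS i] at hxi
    exact absurd hxi (Finset.notMem_empty x)
  rw [this, hC0, zero_div]

lemma pot_bound [DecidableEq α] (n : ℕ) (C : Finset α → ℝ)
    (hCnn : ∀ S, 0 ≤ C S) (hCmono : ∀ S T : Finset α, S ⊆ T → C S ≤ C T)
    (M : Fin n → Finset α) (S : Fin n → Finset α) (hS : ∀ i, S i ⊆ M i) :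
    potential n C S ≤
      ((((univ : Finset (Fin n)).powerset.filter (· ≠ ∅)).card : ℝ))
        * C (univ.biUnion M) := by
  unfold potential
  calc ∑ I ∈ (univ : Finset (Fin n)).powerset.filter (· ≠ ∅),
        C (I.biUnion S) / ((I.card : ℝ) * (n.choose I.card : ℝ))
      ≤ ∑ I ∈ (univ : Finset (Fin n)).powerset.filter (· ≠ ∅),
        C (univ.biUnion M) := by
        apply Finset.sum_le_sum
        intro I hI
        simp only [mem_filter, mem_powerset] at hI
        have hIne : I.Nonempty := Finset.nonempty_iff_ne_empty.2 hI.2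
        have h1 : (1 : ℝ) ≤ (I.card : ℝ) * (n.choose I.card : ℝ) := by
          have hc1 : 1 ≤ I.card := Finset.card_pos.2 hIne
          have hc2 : 1 ≤ n.choose I.card := by
            apply Nat.choose_pos
            calc I.card ≤ (univ : Finset (Fin n)).card := Finset.card_le_card hI.1
            _ = n := Finset.card_univ.trans (Fintype.card_fin n)
          have := Nat.one_le_iff_ne_zero.1 (Nat.one_le_of_lt (Nat.lt_of_lt_of_le Nat.zero_lt_one (Nat.le_of_eq rfl)))
          calc (1:ℝ) = 1 * 1 := by ring
          _ ≤ (I.card : ℝ) * (n.choose I.card : ℝ) := by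
              apply mul_le_mul <;> [exact_mod_cast hc1; exact_mod_cast hc2; norm_num; positivity]
        have hCle : C (I.biUnion S) ≤ C (univ.biUnion M) := by
          apply hCmono
          apply Finset.biUnion_subset.2
          intro i hi
          exact (hS i).trans (Finset.subset_biUnion_of_mem M (mem_univ i))
        calc C (I.biUnion S) / ((I.card : ℝ) * (n.choose I.card : ℝ))
            ≤ C (I.biUnion S) / 1 :=
              div_le_div_of_nonneg_left (hCnn _) one_pos h1
          _ = C (I.biUnion S) := div_one _
          _ ≤ C (univ.biUnion M) := hCle
    _ = _ := by rw [Finset.sum_const, nsmul_eq_mul]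

theorem stmt16 [DecidableEq α] (n : ℕ) (M : Fin n → Finset α)
    (hM : ∀ i j : Fin n, i ≠ j → Disjoint (M i) (M j))
    (C : Finset α → ℝ) (hC0 : C ∅ = 0) (hCnn : ∀ S, 0 ≤ C S)
    (hCmono : ∀ S T : Finset α, S ⊆ T → C S ≤ C T)
    (H : Finset α → EReal) (hH0 : H ∅ = 0) (hHnn : ∀ S, 0 ≤ H S)
    (hHmono : ∀ S T : Finset α, S ⊆ T → H S ≤ H T)
    (ALG : (Fin n → α → ℝ) → Fin n → Finset α)
    (hALGsub : ∀ w i, ALG w i ⊆ M i)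
    (A : (Fin n → α → ℝ) → Fin n → Fin n → Finset α)
    (hAsub : ∀ w i j, A w i j ⊆ M j) (hAii : ∀ w i, A w i i = ∅)
    (hALGmax : ∀ w : Fin n → α → ℝ, (∀ i x, 0 ≤ w i x) →
      ∀ S : Fin n → Finset α, (∀ i, S i ⊆ M i) →
        ((∑ i, ∑ x ∈ S i, w i x : ℝ) : EReal) - H (univ.biUnion S) ≤
          ((∑ i, ∑ x ∈ ALG w i, w i x : ℝ) : EReal) - H (univ.biUnion (ALG w)))
    (hAmax : ∀ w : Fin n → α → ℝ, (∀ i x, 0 ≤ w i x) → ∀ i,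
      ∀ S : Fin n → Finset α, (∀ j, S j ⊆ M j) → S i = ∅ →
        ((∑ j, ∑ x ∈ S j, w j x : ℝ) : EReal) - H (univ.biUnion S) ≤
          ((∑ j, ∑ x ∈ A w i j, w j x : ℝ) : EReal) - H (univ.biUnion (A w i)))
    (p : (Fin n → α → ℝ) → Fin n → ℝ)
    (hp : ∀ w i, ((p w i : ℝ) : EReal) =
      (((∑ j, ∑ x ∈ A w i j, w j x : ℝ) : EReal) - H (univ.biUnion (A w i))) -
        (((∑ j ∈ univ.erase i, ∑ x ∈ ALG w j, w j x : ℝ) : EReal) -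
          H (univ.biUnion (ALG w))))
    (hcover : ∀ w : Fin n → α → ℝ, (∀ i x, 0 ≤ w i x) →
      C (univ.biUnion (ALG w)) ≤ ∑ i, p w i) :
    ∀ S : Fin n → Finset α, (∀ i, S i ⊆ M i) →
      ((potential n C S : ℝ) : EReal) ≤ H (univ.biUnion S) := by
  classical
  have key : ∀ N : ℕ, ∀ S : Fin n → Finset α, (∀ i, S i ⊆ M i) →
      (∑ i, (S i).card) < N →
      ((potential n C S : ℝ) : EReal) ≤ H (univ.biUnion S) := by
    intro N
    induction N with
    | zero => exact fun S hS hlt => absurd hlt (Nat.not_lt_zero _)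
    | succ N ih =>
      intro S hS hcard
      by_contra hcon
      push_neg at hcon
      -- extract h := H(∪S) as a real
      have hnb : H (univ.biUnion S) ≠ ⊥ := by
        intro hb
        have := hHnn (univ.biUnion S)
        rw [hb] at this
        simp at this
      have hHS : H (univ.biUnion S) = ((H (univ.biUnion S)).toReal : EReal) :=
        (EReal.coe_toReal (ne_top_of_lt hcon) hnb).symm
      set h := (H (univ.biUnion S)).toReal with hhdef
      have hh0 : 0 ≤ h := by
        have := hHnn (univ.biUnion S)
        rw [hHS] at this
        exact_mod_cast this
      have hhP : h < potential n C S := by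
        rw [hHS] at hcon
        exact_mod_cast hcon
      -- setup
      set stot := ∑ i, (S i).card with hstot
      have hstotN : stot ≤ N := Nat.lt_succ_iff.1 hcard
      set F := (univ : Finset (Fin n)).powerset.filter (· ≠ ∅) with hFdef
      set K := (F.card : ℝ) * C (univ.biUnion M) with hK
      have hK0 : 0 ≤ K := mul_nonneg (Nat.cast_nonneg _) (hCnn _)
      set v := K + h + 1 with hv
      have hv0 : 0 < v := by linarith
      set w : Fin n → α → ℝ := fun i x => if x ∈ S i then v else 0 with hwdef
      have hwnn : ∀ i x, 0 ≤ w i x := by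
        intro i x
        simp only [hwdef]
        split <;> linarith
      have hval : ∀ (i : Fin n) (T : Finset α),
          ∑ x ∈ T, w i x = ((T ∩ S i).card : ℝ) * v := by
        intro i T
        simp only [hwdef]
        rw [Finset.sum_ite_mem, Finset.sum_const, nsmul_eq_mul]
      have hvalsum : ∀ (J : Finset (Fin n)) (T : Fin n → Finset α),
          ∑ j ∈ J, ∑ x ∈ T j, w j x = ((∑ j ∈ J, (T j ∩ S j).card : ℕ) : ℝ) * v := by
        intro J T
        rw [Finset.sum_congr rfl fun j _ => hval j (T j), ← Finset.sum_mul]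
        norm_cast
      -- analyze T := ALG w
      have hmaxS := hALGmax w hwnn S hS
      rw [hvalsum univ S, hvalsum univ (ALG w), hHS] at hmaxS
      have hSSs : (∑ j, (S j ∩ S j).card) = stot := by
        rw [hstot]
        exact Finset.sum_congr rfl fun j _ => by rw [Finset.inter_self]
      rw [hSSs] at hmaxS
      set cT := ∑ j, (ALG w j ∩ S j).card with hcT
      -- H(∪T) is a real number
      have hTnt : H (univ.biUnion (ALG w)) ≠ ⊤ := by
        intro htop
        rw [htop, EReal.sub_top, ← EReal.coe_sub] at hmaxS
        exact absurd (le_bot_iff.1 hmaxS) (EReal.coe_ne_bot _)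
      have hTnb : H (univ.biUnion (ALG w)) ≠ ⊥ := by
        intro hb
        have := hHnn (univ.biUnion (ALG w))
        rw [hb] at this
        simp at this
      have hHT : H (univ.biUnion (ALG w)) = ((H (univ.biUnion (ALG w))).toReal : EReal) :=
        (EReal.coe_toReal hTnt hTnb).symm
      set t := (H (univ.biUnion (ALG w))).toReal with htdef
      have ht0 : 0 ≤ t := by
        have := hHnn (univ.biUnion (ALG w))
        rw [hHT] at this
        exact_mod_cast this
      rw [hHT, ← EReal.coe_sub, ← EReal.coe_sub] at hmaxS
      have hreal : (stot : ℝ) * v - h ≤ (cT : ℝ) * v - t := by exact_mod_cast hmaxS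
      -- cT = stot
      have hcTle : cT ≤ stot := by
        rw [hcT, hstot]
        exact Finset.sum_le_sum fun j _ => Finset.card_le_card Finset.inter_subset_right
      have hcTs : cT = stot := by
        by_contra hne
        have hlt : cT < stot := lt_of_le_of_ne hcTle hne
        have h1 : (cT : ℝ) + 1 ≤ (stot : ℝ) := by exact_mod_cast hlt
        have h2 : (cT : ℝ) * v ≤ (stot : ℝ) * v - v := by nlinarith
        linarith
      -- S i ⊆ ALG w i
      have hST : ∀ i, S i ⊆ ALG w i := by
        have hsum : ∑ j, ((ALG w j ∩ S j).card) = ∑ j, (S j).card := by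
          rw [← hcT, ← hstot, hcTs]
        have hpw := (Finset.sum_eq_sum_iff_of_le
          (fun j (_ : j ∈ univ) => Finset.card_le_card
            (Finset.inter_subset_right : ALG w j ∩ S j ⊆ S j))).1 hsum
        intro i
        have hci := hpw i (mem_univ i)
        have heq : ALG w i ∩ S i = S i :=
          Finset.eq_of_subset_of_card_le Finset.inter_subset_right (le_of_eq hci.symm)
        exact Finset.inter_eq_right.1 heq
      have hUsub : univ.biUnion S ⊆ univ.biUnion (ALG w) :=
        Finset.biUnion_subset.2 fun i _ =>
          (hST i).trans (Finset.subset_biUnion_of_mem _ (mem_univ i))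
      have hth : t ≤ h := by
        rw [hcTs] at hreal
        linarith
      -- H(∪ A w i) is a real number
      have hBex : ∀ i : Fin n, ∃ r : ℝ, H (univ.biUnion (A w i)) = (r : EReal) ∧ 0 ≤ r := by
        intro i
        have hmaxB := hAmax w hwnn i (fun _ => ∅) (fun j => Finset.empty_subset _) rfl
        have hz : (univ.biUnion fun _ : Fin n => (∅ : Finset α)) = ∅ :=
          Finset.eq_empty_of_forall_notMem fun x hx => by
            rw [Finset.mem_biUnion] at hx
            obtain ⟨j, _, hxj⟩ := hx
            exact absurd hxj (Finset.notMem_empty x)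
        rw [hz, hH0] at hmaxB
        simp only [Finset.sum_empty, EReal.coe_zero, sub_zero] at hmaxB
        have hBnt : H (univ.biUnion (A w i)) ≠ ⊤ := by
          intro htop
          rw [htop, EReal.sub_top] at hmaxB
          exact absurd (le_bot_iff.1 hmaxB) (by simp)
        have hBnb : H (univ.biUnion (A w i)) ≠ ⊥ := by
          intro hb
          have := hHnn (univ.biUnion (A w i))
          rw [hb] at this
          simp at this
        refine ⟨(H (univ.biUnion (A w i))).toReal, (EReal.coe_toReal hBnt hBnb).symm, ?_⟩
        have := hHnn (univ.biUnion (A w i))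
        rw [← EReal.coe_toReal hBnt hBnb] at this
        exact_mod_cast this
      choose b hb hb0 using hBex
      -- payments as reals
      set mB : Fin n → ℕ := fun i => ∑ j, ((A w i j ∩ S j).card) with hmB
      set s' : Fin n → ℕ := fun i => ∑ j ∈ univ.erase i, (S j).card with hs'
      have hs's : ∀ i, s' i + (S i).card = stot := by
        intro i
        rw [hs', hstot]
        exact Finset.sum_erase_add univ _ (mem_univ i)
      have hpeq : ∀ i, p w i = ((mB i : ℝ) * v - b i) - ((s' i : ℝ) * v - t) := by
        intro i
        have hpi := hp w i
        have hvB : (∑ j, ∑ x ∈ A w i j, w j x) = ((mB i : ℕ) : ℝ) * v := hvalsum univ (A w i)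
        have hvT' : (∑ j ∈ univ.erase i, ∑ x ∈ ALG w j, w j x) = ((s' i : ℕ) : ℝ) * v := by
          rw [hvalsum (univ.erase i) (ALG w)]
          congr 2
          apply Finset.sum_congr rfl
          intro j _
          rw [Finset.inter_eq_right.2 (hST j)]
        rw [hvB, hvT', hb i, hHT, ← EReal.coe_sub, ← EReal.coe_sub, ← EReal.coe_sub] at hpi
        exact_mod_cast hpi
      -- the per-player bound
      set q : Fin n → ℝ := fun i =>
        if S i = ∅ then h else potential n C (Function.update S i ∅) with hq
      have hclaim : ∀ i, (mB i : ℝ) * v - b i ≤ (s' i : ℝ) * v - q i := by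
        intro i
        set R : Fin n → Finset α := fun j => A w i j ∩ S j with hR
        have hRM : ∀ j, R j ⊆ M j := fun j =>
          Finset.inter_subset_right.trans (hS j)
        have hRi : R i = ∅ := by rw [hR]; simp only [hAii w i, Finset.empty_inter]
        have hRB : univ.biUnion R ⊆ univ.biUnion (A w i) :=
          Finset.biUnion_subset.2 fun j _ =>
            (Finset.inter_subset_left).trans (Finset.subset_biUnion_of_mem _ (mem_univ j))
        have hHRb : H (univ.biUnion R) ≤ (b i : EReal) := by
          rw [← hb i]; exact hHmono _ _ hRB
        have hmBR : mB i = ∑ j, (R j).card := rfl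
        have hmBer : mB i = ∑ j ∈ univ.erase i, (R j).card := by
          rw [hmBR, ← Finset.sum_erase_add univ _ (mem_univ i), hRi]
          simp
        have hmle : mB i ≤ s' i := by
          rw [hmBer, hs']
          exact Finset.sum_le_sum fun j _ => Finset.card_le_card Finset.inter_subset_right
        -- bound q i ≤ K + h
        have hqb : q i ≤ K + h := by
          simp only [hq]
          by_cases hSi : S i = ∅
          · rw [if_pos hSi]; linarith
          · rw [if_neg hSi]
            have hupdM : ∀ j, Function.update S i ∅ j ⊆ M j := by
              intro j
              rw [Function.update_apply]
              split
              · exact Finset.empty_subset _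
              · exact hS j
            have := pot_bound n C hCnn hCmono M (Function.update S i ∅) hupdM
            rw [← hFdef, ← hK] at this
            linarith
        by_cases hm : mB i = s' i
        · -- R agrees with S off i
          have hsum : ∑ j ∈ univ.erase i, (R j).card = ∑ j ∈ univ.erase i, (S j).card := by
            rw [← hmBer]; exact hm
          have hpw := (Finset.sum_eq_sum_iff_of_le
            (fun j (_ : j ∈ univ.erase i) => Finset.card_le_card
              (Finset.inter_subset_right : A w i j ∩ S j ⊆ S j))).1 hsum
          have hRS : R = Function.update S i ∅ := by
            funext j
            rw [Function.update_apply]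
            by_cases hji : j = i
            · rw [if_pos hji, hji, hRi]
            · rw [if_neg hji]
              have hcj := hpw j (Finset.mem_erase.2 ⟨hji, mem_univ j⟩)
              exact Finset.eq_of_subset_of_card_le Finset.inter_subset_right
                (le_of_eq hcj.symm)
          by_cases hSi : S i = ∅
          · -- R = S
            have hRSe : R = S := by
              rw [hRS]
              funext j
              rw [Function.update_apply]
              split
              · rename_i hji; rw [hji, hSi]
              · rfl
            have hhb : h ≤ b i := by
              have : H (univ.biUnion S) ≤ (b i : EReal) := by rw [← hRSe]; exact hHRb
              rw [hHS] at this
              exact_mod_cast this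
            simp only [hq]
            rw [if_pos hSi, hm]
            linarith
          · -- use the induction hypothesis
            have hScard : 1 ≤ (S i).card := Finset.card_pos.2 (Finset.nonempty_iff_ne_empty.2 hSi)
            have hRcard : ∑ j, (R j).card < N := by
              have h1 : ∑ j, (R j).card = s' i := by rw [← hmBR, hm]
              have := hs's i
              omega
            have hih := ih R hRM hRcard
            have hPRb : potential n C R ≤ b i := by
              have := hih.trans hHRb
              exact_mod_cast this
            simp only [hq]
            rw [if_neg hSi, hm, ← hRS]
            linarith
        · -- strict inequality
          have hlt : mB i < s' i := lt_of_le_of_ne hmle hm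
          have h1 : (mB i : ℝ) + 1 ≤ (s' i : ℝ) := by exact_mod_cast hlt
          have h2 : (mB i : ℝ) * v ≤ (s' i : ℝ) * v - v := by nlinarith
          have hbi0 := hb0 i
          linarith
      -- summing payments
      have hsump : ∑ i, p w i ≤ (n : ℝ) * t - ∑ i, q i := by
        have e1 : ∑ i, p w i = ∑ i, (((mB i : ℝ) * v - b i) - ((s' i : ℝ) * v - t)) :=
          Finset.sum_congr rfl fun i _ => hpeq i
        rw [e1]
        calc ∑ i, (((mB i : ℝ) * v - b i) - ((s' i : ℝ) * v - t))
            ≤ ∑ i, (t - q i) :=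
              Finset.sum_le_sum fun i _ => by have := hclaim i; linarith
          _ = (n : ℝ) * t - ∑ i, q i := by
              rw [Finset.sum_sub_distrib, Finset.sum_const, Finset.card_univ,
                Fintype.card_fin, nsmul_eq_mul]
      have hcov := hcover w hwnn
      have hCS : C (univ.biUnion S) ≤ (n : ℝ) * t - ∑ i, q i :=
        le_trans (hCmono _ _ hUsub) (le_trans hcov hsump)
      -- split the q sum
      set E := univ.filter (fun i : Fin n => S i = ∅) with hE
      set Kc := univ.filter (fun i : Fin n => ¬ S i = ∅) with hKc
      have hqsum : ∑ i, q i =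
          (E.card : ℝ) * h + ∑ i ∈ Kc, potential n C (Function.update S i ∅) := by
        simp only [hq]
        rw [Finset.sum_ite, Finset.sum_const, nsmul_eq_mul, ← hE, ← hKc]
      -- potential identity split
      have hid := pot_id n C hC0 S
      have hsplit := Finset.sum_filter_add_sum_filter_not univ (fun i : Fin n => S i = ∅)
        (fun i => potential n C S - potential n C (Function.update S i ∅))
      rw [← hE, ← hKc] at hsplit
      have hEzero : ∑ i ∈ E,
          (potential n C S - potential n C (Function.update S i ∅)) = 0 := by
        apply Finset.sum_eq_zero
        intro i hi
        rw [hE, Finset.mem_filter] at hi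
        have hupd : Function.update S i ∅ = S := by
          funext j
          rw [Function.update_apply]
          split
          · rename_i hji; rw [hji, hi.2]
          · rfl
        rw [hupd, sub_self]
      have hidKc : ∑ i ∈ Kc,
          (potential n C S - potential n C (Function.update S i ∅)) = C (univ.biUnion S) := by
        rw [← hid, ← hsplit, hEzero, zero_add]
      have hKcsum : (Kc.card : ℝ) * potential n C S
          = C (univ.biUnion S) + ∑ i ∈ Kc, potential n C (Function.update S i ∅) := by
        rw [← hidKc, Finset.sum_sub_distrib, Finset.sum_const, nsmul_eq_mul]
        ring
      have hcardEK : E.card + Kc.card = n := by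
        rw [hE, hKc, Finset.card_filter_add_card_filter_not,
          Finset.card_univ, Fintype.card_fin]
      have hKcpos : 0 < Kc.card := by
        rcases Nat.eq_zero_or_pos Kc.card with h0 | h0
        · exfalso
          have hall : ∀ i, S i = ∅ := by
            intro i
            by_contra hne
            have hiK : i ∈ Kc := by rw [hKc, Finset.mem_filter]; exact ⟨mem_univ i, hne⟩
            rw [Finset.card_eq_zero.1 h0] at hiK
            exact absurd hiK (Finset.notMem_empty i)
          have := pot_zero n C hC0 S hall
          linarith
        · exact h0
      have hnt : (n : ℝ) * t ≤ (n : ℝ) * h :=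
        mul_le_mul_of_nonneg_left hth (Nat.cast_nonneg n)
      have hEK : (E.card : ℝ) + (Kc.card : ℝ) = (n : ℝ) := by exact_mod_cast hcardEK
      rw [hqsum] at hCS
      have hnh : (n : ℝ) * h = (E.card : ℝ) * h + (Kc.card : ℝ) * h := by
        rw [← hEK]; ring
      have hfin : (Kc.card : ℝ) * potential n C S ≤ (Kc.card : ℝ) * h := by
        rw [hKcsum]
        linarith
      have hKcR : (0 : ℝ) < (Kc.card : ℝ) := by exact_mod_cast hKcpos
      have hPh : potential n C S ≤ h := le_of_mul_le_mul_left hfin hKcR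
      linarith
  intro S hS
  exact key (∑ i, (S i).card + 1) S hS (Nat.lt_succ_self _)
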